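/- arXiv:1202.2390 — 2 statements merged into one kernel-verified Lean document; each statement's English description precedes it below -/
import Mathlib

section
/- Let 𝒟 be an inclusion-closed collection of families of nonempty subsets of X, let K ∈ 𝒟 be a closed measurable 𝒟-pullback absorbing set for Φ, and suppose Φ is 𝒟-pullback asymptotically compact in X. Then the unique 𝒟-pullback attractor 𝒜 of Φ satisfies, for all ω₁ ∈ Ω₁ and ω₂ ∈ Ω₂: 𝒜(ω₁,ω₂) = ⋃_{B∈𝒟} Ω(B,ω₁,ω₂). -/
open MeasureTheory Filter Set Topology
open scoped ENNReal

namespace RDS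

/-- A group of transformations of `α` parametrized by `ℝ`. -/
def IsGroupAction {α : Type*} (θ : ℝ → α → α) : Prop :=
  (∀ a, θ 0 a = a) ∧ ∀ s t : ℝ, ∀ a, θ (s + t) a = θ t (θ s a)

variable {Ω₁ Ω₂ X : Type*} [MetricSpace X] [MeasurableSpace X] [MeasurableSpace Ω₂]

/-- A continuous cocycle on `X` over the parametric dynamical systems
`(Ω₁, θ₁)` and `(Ω₂, ℱ₂, P, θ₂)` (Definition 2.1). -/
structure IsCocycle (θ₁ : ℝ → Ω₁ → Ω₁) (θ₂ : ℝ → Ω₂ → Ω₂)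
    (Φ : ℝ → Ω₁ → Ω₂ → X → X) : Prop where
  measurable : ∀ ω₁ : Ω₁,
    Measurable fun p : {t : ℝ // 0 ≤ t} × Ω₂ × X => Φ p.1.1 ω₁ p.2.1 p.2.2
  map_zero : ∀ (ω₁ : Ω₁) (ω₂ : Ω₂) (x : X), Φ 0 ω₁ ω₂ x = x
  cocycle : ∀ t τ : ℝ, 0 ≤ t → 0 ≤ τ → ∀ (ω₁ : Ω₁) (ω₂ : Ω₂) (x : X),
    Φ (t + τ) ω₁ ω₂ x = Φ t (θ₁ τ ω₁) (θ₂ τ ω₂) (Φ τ ω₁ ω₂ x)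
  continuous : ∀ t : ℝ, 0 ≤ t → ∀ (ω₁ : Ω₁) (ω₂ : Ω₂),
    Continuous fun x : X => Φ t ω₁ ω₂ x

/-- A complete orbit of the cocycle `Φ` (Definition 2.9). -/
def IsCompleteOrbit (θ₁ : ℝ → Ω₁ → Ω₁) (θ₂ : ℝ → Ω₂ → Ω₂)
    (Φ : ℝ → Ω₁ → Ω₂ → X → X) (ψ : ℝ → Ω₁ → Ω₂ → X) : Prop :=
  ∀ t τ : ℝ, 0 ≤ t → ∀ (ω₁ : Ω₁) (ω₂ : Ω₂),
    Φ t (θ₁ τ ω₁) (θ₂ τ ω₂) (ψ τ ω₁ ω₂) = ψ (t + τ) ω₁ ω₂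

/-- A `𝒟`-complete orbit of `Φ`. -/
def IsDCompleteOrbit (θ₁ : ℝ → Ω₁ → Ω₁) (θ₂ : ℝ → Ω₂ → Ω₂)
    (Φ : ℝ → Ω₁ → Ω₂ → X → X) (𝒟 : Set (Ω₁ → Ω₂ → Set X))
    (ψ : ℝ → Ω₁ → Ω₂ → X) : Prop :=
  IsCompleteOrbit θ₁ θ₂ Φ ψ ∧
    ∃ D ∈ 𝒟, ∀ (t : ℝ) (ω₁ : Ω₁) (ω₂ : Ω₂), ψ t ω₁ ω₂ ∈ D (θ₁ t ω₁) (θ₂ t ω₂)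

/-- Positive invariance of a family under `Φ`. -/
def PositivelyInvariant (θ₁ : ℝ → Ω₁ → Ω₁) (θ₂ : ℝ → Ω₂ → Ω₂)
    (Φ : ℝ → Ω₁ → Ω₂ → X → X) (B : Ω₁ → Ω₂ → Set X) : Prop :=
  ∀ t : ℝ, 0 ≤ t → ∀ (ω₁ : Ω₁) (ω₂ : Ω₂),
    Φ t ω₁ ω₂ '' B ω₁ ω₂ ⊆ B (θ₁ t ω₁) (θ₂ t ω₂)

/-- Invariance of a family under `Φ`. -/
def Invariant (θ₁ : ℝ → Ω₁ → Ω₁) (θ₂ : ℝ → Ω₂ → Ω₂)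
    (Φ : ℝ → Ω₁ → Ω₂ → X → X) (B : Ω₁ → Ω₂ → Set X) : Prop :=
  ∀ t : ℝ, 0 ≤ t → ∀ (ω₁ : Ω₁) (ω₂ : Ω₂),
    Φ t ω₁ ω₂ '' B ω₁ ω₂ = B (θ₁ t ω₁) (θ₂ t ω₂)

/-- Quasi-invariance of a family under `Φ`. -/
def QuasiInvariant (θ₁ : ℝ → Ω₁ → Ω₁) (θ₂ : ℝ → Ω₂ → Ω₂)
    (Φ : ℝ → Ω₁ → Ω₂ → X → X) (B : Ω₁ → Ω₂ → Set X) : Prop :=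
  ∀ y : Ω₁ → Ω₂ → X, (∀ (ω₁ : Ω₁) (ω₂ : Ω₂), y ω₁ ω₂ ∈ B ω₁ ω₂) →
    ∃ ψ : ℝ → Ω₁ → Ω₂ → X, IsCompleteOrbit θ₁ θ₂ Φ ψ ∧
      (∀ (ω₁ : Ω₁) (ω₂ : Ω₂), ψ 0 ω₁ ω₂ = y ω₁ ω₂) ∧
      ∀ (t : ℝ) (ω₁ : Ω₁) (ω₂ : Ω₂), ψ t ω₁ ω₂ ∈ B (θ₁ t ω₁) (θ₂ t ω₂)

/-- The Ω-limit set of a family `B` (Definition 2.13). -/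
def omegaLimit (θ₁ : ℝ → Ω₁ → Ω₁) (θ₂ : ℝ → Ω₂ → Ω₂)
    (Φ : ℝ → Ω₁ → Ω₂ → X → X) (B : Ω₁ → Ω₂ → Set X) (ω₁ : Ω₁) (ω₂ : Ω₂) : Set X :=
  ⋂ τ ∈ Ici (0 : ℝ), closure (⋃ t ∈ Ici τ,
    Φ t (θ₁ (-t) ω₁) (θ₂ (-t) ω₂) '' B (θ₁ (-t) ω₁) (θ₂ (-t) ω₂))

/-- `𝒟` is a collection of families of nonempty subsets of `X`. -/
def FamiliesOfNonemptySets (𝒟 : Set (Ω₁ → Ω₂ → Set X)) : Prop :=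
  ∀ D ∈ 𝒟, ∀ (ω₁ : Ω₁) (ω₂ : Ω₂), (D ω₁ ω₂).Nonempty

/-- Neighborhood closedness of the collection `𝒟` (Definition 2.5). -/
def NeighborhoodClosed (𝒟 : Set (Ω₁ → Ω₂ → Set X)) : Prop :=
  ∀ D ∈ 𝒟, ∃ ε : ℝ, 0 < ε ∧ ∀ B : Ω₁ → Ω₂ → Set X,
    (∀ (ω₁ : Ω₁) (ω₂ : Ω₂), (B ω₁ ω₂).Nonempty ∧
      B ω₁ ω₂ ⊆ Metric.thickening ε (D ω₁ ω₂)) → B ∈ 𝒟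

/-- Inclusion closedness of the collection `𝒟`. -/
def InclusionClosed (𝒟 : Set (Ω₁ → Ω₂ → Set X)) : Prop :=
  ∀ D ∈ 𝒟, ∀ B : Ω₁ → Ω₂ → Set X,
    (∀ (ω₁ : Ω₁) (ω₂ : Ω₂), (B ω₁ ω₂).Nonempty ∧ B ω₁ ω₂ ⊆ D ω₁ ω₂) → B ∈ 𝒟

/-- `𝒟`-pullback asymptotic compactness of `Φ` (Definition 2.16). -/
def AsymptoticallyCompact (θ₁ : ℝ → Ω₁ → Ω₁) (θ₂ : ℝ → Ω₂ → Ω₂)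
    (Φ : ℝ → Ω₁ → Ω₂ → X → X) (𝒟 : Set (Ω₁ → Ω₂ → Set X)) : Prop :=
  ∀ (ω₁ : Ω₁) (ω₂ : Ω₂), ∀ B ∈ 𝒟, ∀ (t : ℕ → ℝ) (x : ℕ → X),
    Tendsto t atTop atTop →
    (∀ n, x n ∈ B (θ₁ (-t n) ω₁) (θ₂ (-t n) ω₂)) →
    ∃ (φ : ℕ → ℕ) (y : X), StrictMono φ ∧
      Tendsto (fun n => Φ (t (φ n)) (θ₁ (-t (φ n)) ω₁) (θ₂ (-t (φ n)) ω₂) (x (φ n)))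
        atTop (𝓝 y)

/-- The Hausdorff semi-metric `d(C,B) = sup_{x ∈ C} inf_{b ∈ B} d(x,b)`,
valued in `ℝ≥0∞`. -/
noncomputable def hausSemidist (C B : Set X) : ℝ≥0∞ :=
  ⨆ x ∈ C, EMetric.infEdist x B

/-- The family `A` pullback attracts the family `B` under `Φ`. -/
def Attracts (θ₁ : ℝ → Ω₁ → Ω₁) (θ₂ : ℝ → Ω₂ → Ω₂)
    (Φ : ℝ → Ω₁ → Ω₂ → X → X) (B A : Ω₁ → Ω₂ → Set X) : Prop :=
  ∀ (ω₁ : Ω₁) (ω₂ : Ω₂),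
    Tendsto (fun t : ℝ => hausSemidist
        (Φ t (θ₁ (-t) ω₁) (θ₂ (-t) ω₂) '' B (θ₁ (-t) ω₁) (θ₂ (-t) ω₂)) (A ω₁ ω₂))
      atTop (𝓝 0)

/-- A `𝒟`-pullback absorbing set for `Φ` (Definition 2.15). -/
def IsAbsorbingSet (θ₁ : ℝ → Ω₁ → Ω₁) (θ₂ : ℝ → Ω₂ → Ω₂)
    (Φ : ℝ → Ω₁ → Ω₂ → X → X) (𝒟 : Set (Ω₁ → Ω₂ → Set X))
    (K : Ω₁ → Ω₂ → Set X) : Prop :=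
  K ∈ 𝒟 ∧ ∀ (ω₁ : Ω₁) (ω₂ : Ω₂), ∀ B ∈ 𝒟, ∃ T : ℝ, 0 < T ∧ ∀ t : ℝ, T ≤ t →
    Φ t (θ₁ (-t) ω₁) (θ₂ (-t) ω₂) '' B (θ₁ (-t) ω₁) (θ₂ (-t) ω₂) ⊆ K ω₁ ω₂

/-- A closed measurable (w.r.t. the `P`-completion of `ℱ₂`) `𝒟`-pullback
absorbing set for `Φ`. -/
def IsClosedMeasurableAbsorbingSet (θ₁ : ℝ → Ω₁ → Ω₁) (θ₂ : ℝ → Ω₂ → Ω₂)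
    (Φ : ℝ → Ω₁ → Ω₂ → X → X) (P : Measure Ω₂) (𝒟 : Set (Ω₁ → Ω₂ → Set X))
    (K : Ω₁ → Ω₂ → Set X) : Prop :=
  IsAbsorbingSet θ₁ θ₂ Φ 𝒟 K ∧
    (∀ (ω₁ : Ω₁) (ω₂ : Ω₂), IsClosed (K ω₁ ω₂) ∧ (K ω₁ ω₂).Nonempty) ∧
    ∀ (ω₁ : Ω₁) (x : X), NullMeasurable (fun ω₂ => Metric.infDist x (K ω₁ ω₂)) P

/-- A `𝒟`-pullback attractor for `Φ` (Definition 2.17). -/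
structure IsPullbackAttractor (θ₁ : ℝ → Ω₁ → Ω₁) (θ₂ : ℝ → Ω₂ → Ω₂)
    (Φ : ℝ → Ω₁ → Ω₂ → X → X) (P : Measure Ω₂) (𝒟 : Set (Ω₁ → Ω₂ → Set X))
    (A : Ω₁ → Ω₂ → Set X) : Prop where
  mem : A ∈ 𝒟
  compact : ∀ (ω₁ : Ω₁) (ω₂ : Ω₂), IsCompact (A ω₁ ω₂)
  measurable : ∀ (ω₁ : Ω₁) (x : X),
    NullMeasurable (fun ω₂ => Metric.infDist x (A ω₁ ω₂)) P
  invariant : Invariant θ₁ θ₂ Φ A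
  attracts : ∀ B ∈ 𝒟, Attracts θ₁ θ₂ Φ B A

end RDS

/-!
Invariance makes every pullback image of `𝒜` equal to `𝒜(ω₁, ω₂)`, so `𝒜(ω₁, ω₂)` lies in its own
Ω-limit set, and `𝒜 ∈ 𝒟`. Conversely, attraction puts all late pullback images of `B ∈ 𝒟` in any
closed `ε`-neighbourhood of `𝒜(ω₁, ω₂)`; so does their closure, hence `Ω(B, ω₁, ω₂)` lies in the
closed set `𝒜(ω₁, ω₂)`.
-/

namespace RDS

variable {Ω₁ Ω₂ X : Type*} {θ₁ : ℝ → Ω₁ → Ω₁} {θ₂ : ℝ → Ω₂ → Ω₂} {Φ : ℝ → Ω₁ → Ω₂ → X → X}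

theorem IsGroupAction.apply_apply_neg {α : Type*} {θ : ℝ → α → α} (hθ : IsGroupAction θ)
    (t : ℝ) (a : α) : θ t (θ (-t) a) = a := by
  rw [← hθ.2, neg_add_cancel, hθ.1]

theorem Invariant.image_pullback_eq (hθ₁ : IsGroupAction θ₁) (hθ₂ : IsGroupAction θ₂)
    {A : Ω₁ → Ω₂ → Set X} (hA : Invariant θ₁ θ₂ Φ A) {t : ℝ} (ht : 0 ≤ t) (ω₁ : Ω₁) (ω₂ : Ω₂) :
    Φ t (θ₁ (-t) ω₁) (θ₂ (-t) ω₂) '' A (θ₁ (-t) ω₁) (θ₂ (-t) ω₂) = A ω₁ ω₂ := by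
  rw [hA t ht, hθ₁.apply_apply_neg, hθ₂.apply_apply_neg]

theorem Invariant.subset_omegaLimit [MetricSpace X] (hθ₁ : IsGroupAction θ₁)
    (hθ₂ : IsGroupAction θ₂) {A : Ω₁ → Ω₂ → Set X} (hA : Invariant θ₁ θ₂ Φ A)
    (ω₁ : Ω₁) (ω₂ : Ω₂) : A ω₁ ω₂ ⊆ omegaLimit θ₁ θ₂ Φ A ω₁ ω₂ := by
  refine subset_iInter₂ fun τ (hτ : 0 ≤ τ) => subset_closure.trans' ?_
  rw [← hA.image_pullback_eq hθ₁ hθ₂ hτ]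
  exact subset_biUnion_of_mem (u := fun t => Φ t (θ₁ (-t) ω₁) (θ₂ (-t) ω₂) ''
    A (θ₁ (-t) ω₁) (θ₂ (-t) ω₂)) (le_refl τ)

theorem infEDist_le_hausSemidist [MetricSpace X] {x : X} {C : Set X} (hx : x ∈ C) (B : Set X) :
    Metric.infEDist x B ≤ hausSemidist C B :=
  le_iSup₂ (f := fun y (_ : y ∈ C) => Metric.infEDist y B) x hx

theorem Attracts.omegaLimit_subset_closure [MetricSpace X] {B A : Ω₁ → Ω₂ → Set X}
    (hBA : Attracts θ₁ θ₂ Φ B A) (ω₁ : Ω₁) (ω₂ : Ω₂) :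
    omegaLimit θ₁ θ₂ Φ B ω₁ ω₂ ⊆ closure (A ω₁ ω₂) := by
  intro x hx
  rw [Metric.mem_closure_iff_infEDist_zero, ← nonpos_iff_eq_zero]
  refine ENNReal.le_of_forall_pos_le_add fun ε hε _ => ?_
  obtain ⟨T, hT⟩ := eventually_atTop.1 (ENNReal.tendsto_nhds_zero.1 (hBA ω₁ ω₂) ε
    (by exact_mod_cast hε))
  have hnbhd : ⋃ t ∈ Ici (max T 0), Φ t (θ₁ (-t) ω₁) (θ₂ (-t) ω₂) '' B (θ₁ (-t) ω₁) (θ₂ (-t) ω₂)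
      ⊆ {y | Metric.infEDist y (A ω₁ ω₂) ≤ ε} :=
    iUnion₂_subset fun t ht _ hy =>
      (infEDist_le_hausSemidist hy _).trans (hT t ((le_max_left T 0).trans ht))
  have hclosed : IsClosed {y | Metric.infEDist y (A ω₁ ω₂) ≤ ε} :=
    isClosed_le Metric.continuous_infEDist continuous_const
  simpa using closure_minimal hnbhd hclosed (mem_iInter₂.1 hx (max T 0) (le_max_right T 0))

theorem attractor_eq_union_omegaLimits_general
    {Ω₁ Ω₂ X : Type*}
    [MetricSpace X]
    [MeasurableSpace Ω₂] (P : Measure Ω₂)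
    (θ₁ : ℝ → Ω₁ → Ω₁) (θ₂ : ℝ → Ω₂ → Ω₂)
    (hθ₁ : IsGroupAction θ₁) (hθ₂ : IsGroupAction θ₂)
    (Φ : ℝ → Ω₁ → Ω₂ → X → X)
    (𝒟 : Set (Ω₁ → Ω₂ → Set X)) :
    ∀ A : Ω₁ → Ω₂ → Set X, IsPullbackAttractor θ₁ θ₂ Φ P 𝒟 A →
      ∀ (ω₁ : Ω₁) (ω₂ : Ω₂), A ω₁ ω₂ = ⋃ B ∈ 𝒟, omegaLimit θ₁ θ₂ Φ B ω₁ ω₂ := by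
  intro A hA ω₁ ω₂
  apply Subset.antisymm
  · exact (hA.invariant.subset_omegaLimit hθ₁ hθ₂ ω₁ ω₂).trans
      (subset_biUnion_of_mem (u := fun B => omegaLimit θ₁ θ₂ Φ B ω₁ ω₂) hA.mem)
  · refine iUnion₂_subset fun B hB => ?_
    rw [← (hA.compact ω₁ ω₂).isClosed.closure_eq]
    exact (hA.attracts B hB).omegaLimit_subset_closure ω₁ ω₂

theorem attractor_eq_union_omegaLimits
    {Ω₁ Ω₂ X : Type*} [Nonempty Ω₁]
    [MetricSpace X] [CompleteSpace X] [SecondCountableTopology X]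
    [MeasurableSpace X] [BorelSpace X]
    [MeasurableSpace Ω₂] (P : Measure Ω₂) [IsProbabilityMeasure P]
    (θ₁ : ℝ → Ω₁ → Ω₁) (θ₂ : ℝ → Ω₂ → Ω₂)
    (hθ₁ : IsGroupAction θ₁) (hθ₂ : IsGroupAction θ₂)
    (hθ₂meas : Measurable fun p : ℝ × Ω₂ => θ₂ p.1 p.2)
    (hθ₂pres : ∀ t : ℝ, MeasurePreserving (θ₂ t) P P)
    (Φ : ℝ → Ω₁ → Ω₂ → X → X)
    (hΦ : IsCocycle θ₁ θ₂ Φ)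
    (𝒟 : Set (Ω₁ → Ω₂ → Set X))
    (h𝒟ne : FamiliesOfNonemptySets 𝒟)
    (h𝒟ic : InclusionClosed 𝒟)
    (K : Ω₁ → Ω₂ → Set X)
    (hK : IsClosedMeasurableAbsorbingSet θ₁ θ₂ Φ P 𝒟 K)
    (hac : AsymptoticallyCompact θ₁ θ₂ Φ 𝒟) :
    ∀ A : Ω₁ → Ω₂ → Set X, IsPullbackAttractor θ₁ θ₂ Φ P 𝒟 A →
      ∀ (ω₁ : Ω₁) (ω₂ : Ω₂), A ω₁ ω₂ = ⋃ B ∈ 𝒟, omegaLimit θ₁ θ₂ Φ B ω₁ ω₂ :=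
  attractor_eq_union_omegaLimits_general P θ₁ θ₂ hθ₁ hθ₂ Φ 𝒟

end RDS
end

section
/- Suppose Φ is a continuous periodic cocycle on X with period T > 0, and let 𝒟 be a neighborhood closed and T-translation invariant collection of families of nonempty subsets of X. If Φ is 𝒟-pullback asymptotically compact in X and Φ has a closed measurable 𝒟-pullback absorbing set K in 𝒟, then Φ has a unique 𝒟-pullback attractor 𝒜 ∈ 𝒟, and 𝒜 is periodic with period T, i.e. 𝒜(θ₁(T)ω₁,ω₂) = 𝒜(ω₁,ω₂) for all ω₁ ∈ Ω₁ and ω₂ ∈ Ω₂. -/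
/-!
The attractor is the pullback ω-limit set of the absorbing family `K`. Absorption turns a
pullback trajectory issued from any family of `𝒟` into one issued from `K` after a fixed time,
so asymptotic compactness makes this ω-limit set nonempty, compact, invariant and attracting
for all of `𝒟`; it lies in `K`, so neighbourhood closedness puts it in `𝒟`. Its distance
functions are limits of those of the pullback images of `K` at integer times, which are
measurable thanks to a Castaing representation of `K` by countably many measurable selections.
An invariant family attracted by a closed one lies inside it, hence the attractor is unique;
since `Φ` is `T`-periodic and `𝒟` is `T`-translation invariant, the `T`-translate of the
attractor is again a `𝒟`-pullback attractor and therefore equals it.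
-/

open MeasureTheory Filter Set Topology
open scoped ENNReal

section MeasurableSelection

open Metric TopologicalSpace

variable {Ω X : Type*} [MeasurableSpace Ω] [PseudoMetricSpace X] [MeasurableSpace X]
  [SeparableSpace X] {L : Ω → Set X}

lemma exists_measurable_infDist_lt [Nonempty X] [OpensMeasurableSpace X]
    (hne : ∀ ω, (L ω).Nonempty) (hL : ∀ x, Measurable fun ω => infDist x (L ω))
    {r : ℝ} (hr : 0 < r) :
    ∃ g : Ω → X, Measurable g ∧ ∀ ω, infDist (g ω) (L ω) < r := by
  have hex : ∀ ω, ∃ n, infDist (denseSeq X n) (L ω) < r := fun ω =>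
    have ⟨y, hy⟩ := hne ω
    have ⟨_, ⟨n, rfl⟩, hn⟩ := Metric.mem_closure_iff.1 (denseRange_denseSeq X y) r hr
    ⟨n, (infDist_le_dist_of_mem hy).trans_lt (by rwa [dist_comm])⟩
  exact ⟨_, Measurable.find (fun _ => measurable_const)
    (fun n => hL _ measurableSet_Iio) hex, fun ω => Nat.find_spec (hex ω)⟩

lemma exists_measurable_infDist_lt_of_infDist_lt [Nonempty X] [OpensMeasurableSpace X]
    (hne : ∀ ω, (L ω).Nonempty) (hL : ∀ x, Measurable fun ω => infDist x (L ω)) {f : Ω → X}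
    (hf : Measurable f)
    {δ δ' : ℝ} (hδ' : 0 < δ') (hfL : ∀ ω, infDist (f ω) (L ω) < δ) :
    ∃ g : Ω → X, Measurable g ∧
      ∀ ω, infDist (g ω) (L ω) < δ' ∧ dist (g ω) (f ω) < δ + δ' := by
  have hex : ∀ ω, ∃ n, infDist (denseSeq X n) (L ω) < δ' ∧
      dist (denseSeq X n) (f ω) < δ + δ' := by
    intro ω
    obtain ⟨y, hy, hfy⟩ := (infDist_lt_iff (hne ω)).1 (hfL ω)
    obtain ⟨_, ⟨n, rfl⟩, hn⟩ := Metric.mem_closure_iff.1 (denseRange_denseSeq X y) δ' hδ'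
    rw [dist_comm] at hn
    refine ⟨n, (infDist_le_dist_of_mem hy).trans_lt hn, ?_⟩
    linarith [dist_triangle (denseSeq X n) y (f ω), dist_comm y (f ω)]
  -- taking the first admissible point of the dense sequence keeps the choice measurable
  refine ⟨_, Measurable.find (fun _ => measurable_const) (fun n => ?_) hex,
    fun ω => Nat.find_spec (hex ω)⟩
  exact (hL _ measurableSet_Iio).inter
    (measurableSet_lt (measurable_const.dist hf) measurable_const)

lemma exists_measurable_mem_of_infDist_lt [Nonempty X] [BorelSpace X] [CompleteSpace X]
    (hc : ∀ ω, IsClosed (L ω)) (hne : ∀ ω, (L ω).Nonempty)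
    (hL : ∀ x, Measurable fun ω => infDist x (L ω)) {f : Ω → X} (hf : Measurable f)
    {r : ℝ} (hr : 0 < r) (hfL : ∀ ω, infDist (f ω) (L ω) < r) :
    ∃ s : Ω → X, Measurable s ∧ ∀ ω, s ω ∈ L ω ∧ dist (f ω) (s ω) ≤ 3 * r := by
  set δ : ℕ → ℝ := fun j => r * (1 / 2) ^ j
  let S (j : ℕ) := {g : Ω → X // Measurable g ∧ ∀ ω, infDist (g ω) (L ω) < δ j}
  have hnext : ∀ j (g : S j), ∃ g' : S (j + 1), ∀ ω, dist (g'.1 ω) (g.1 ω) < δ j + δ (j + 1) :=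
    fun j g =>
      have ⟨g', hg', h⟩ := exists_measurable_infDist_lt_of_infDist_lt hne hL g.2.1
        (by positivity) g.2.2
      ⟨⟨g', hg', fun ω => (h ω).1⟩, fun ω => (h ω).2⟩
  choose next hnext using hnext
  let u : (j : ℕ) → S j := fun j => Nat.rec ⟨f, hf, by simpa [δ] using hfL⟩ next j
  have hgeom : ∀ ω j, dist ((u j).1 ω) ((u (j + 1)).1 ω) ≤ 3 * r / 2 * (1 / 2) ^ j := by
    intro ω j
    rw [dist_comm]
    refine (hnext j (u j) ω).le.trans_eq ?_
    simp only [δ, pow_succ]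
    ring
  have hlim : ∀ ω, ∃ x, Tendsto (fun j => (u j).1 ω) atTop (𝓝 x) := fun ω =>
    cauchySeq_tendsto_of_complete (cauchySeq_of_le_geometric _ _ (by norm_num) (hgeom ω))
  choose s hs using hlim
  refine ⟨s, measurable_of_tendsto_metrizable (fun j => (u j).2.1) (tendsto_pi_nhds.2 hs),
    fun ω => ⟨?_, ?_⟩⟩
  · have hδ : Tendsto δ atTop (𝓝 0) := by
      simpa [δ] using (tendsto_pow_atTop_nhds_zero_of_lt_one (by norm_num : (0 : ℝ) ≤ 1 / 2)
        (by norm_num)).const_mul r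
    have h0 : infDist (s ω) (L ω) ≤ 0 :=
      le_of_tendsto_of_tendsto (((continuous_infDist_pt _).tendsto _).comp (hs ω)) hδ
        (Eventually.of_forall fun j => ((u j).2.2 ω).le)
    exact ((hc ω).mem_iff_infDist_zero (hne ω)).2 (le_antisymm h0 infDist_nonneg)
  · have := dist_le_of_le_geometric_of_tendsto₀ _ _ (by norm_num) (hgeom ω) (hs ω)
    exact this.trans_eq (by norm_num; ring)

theorem exists_measurable_dense_selections [BorelSpace X] [CompleteSpace X]
    (hc : ∀ ω, IsClosed (L ω)) (hne : ∀ ω, (L ω).Nonempty)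
    (hL : ∀ x, Measurable fun ω => infDist x (L ω)) :
    ∃ σ : ℕ → Ω → X, (∀ n, Measurable (σ n)) ∧ (∀ n ω, σ n ω ∈ L ω) ∧
      ∀ ω, L ω ⊆ closure (range fun n => σ n ω) := by
  obtain hΩ | hΩ := isEmpty_or_nonempty Ω
  · exact ⟨fun _ => isEmptyElim, fun _ => Subsingleton.measurable, fun _ => isEmptyElim,
      isEmptyElim⟩
  have : Nonempty X := ⟨(hne hΩ.some).some⟩
  have hsel : ∀ pk : ℕ × ℕ, ∃ s : Ω → X, Measurable s ∧ ∀ ω, s ω ∈ L ω ∧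
      (infDist (denseSeq X pk.1) (L ω) < 1 / (pk.2 + 1) →
        dist (denseSeq X pk.1) (s ω) ≤ 3 * (1 / (pk.2 + 1))) := by
    classical
    rintro ⟨p, k⟩
    have hr : (0 : ℝ) < 1 / (k + 1) := by positivity
    obtain ⟨g, hg, hgL⟩ := exists_measurable_infDist_lt hne hL hr
    set A := {ω | infDist (denseSeq X p) (L ω) < 1 / (k + 1)}
    have hA : MeasurableSet A := hL _ measurableSet_Iio
    obtain ⟨s, hs, hsL⟩ := exists_measurable_mem_of_infDist_lt hc hne hL
      (Measurable.piecewise hA (measurable_const (a := denseSeq X p)) hg) hr fun ω => by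
        by_cases hω : ω ∈ A
        · rw [piecewise_eq_of_mem _ _ _ hω]; exact hω
        · rw [piecewise_eq_of_notMem _ _ _ hω]; exact hgL ω
    refine ⟨s, hs, fun ω => ⟨(hsL ω).1, fun hω => ?_⟩⟩
    simpa only [piecewise_eq_of_mem A _ _ hω] using (hsL ω).2
  choose s hs hsL hsd using hsel
  refine ⟨fun n => s n.unpair, fun n => hs _, fun n ω => hsL _ ω, fun ω z hz => ?_⟩
  refine Metric.mem_closure_iff.2 fun ε hε => ?_
  obtain ⟨k, hk⟩ := exists_nat_one_div_lt (show 0 < ε / 4 by positivity)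
  have hr : (0 : ℝ) < 1 / (k + 1) := by positivity
  obtain ⟨_, ⟨p, rfl⟩, hp⟩ := Metric.mem_closure_iff.1 (denseRange_denseSeq X z) _ hr
  have hpL : infDist (denseSeq X p) (L ω) < 1 / (k + 1) :=
    (infDist_le_dist_of_mem hz).trans_lt (by rwa [dist_comm])
  refine ⟨_, ⟨Nat.pair p k, rfl⟩, ?_⟩
  have := hsd (p, k) ω hpL
  simp only [Nat.unpair_pair] at this ⊢
  linarith [dist_triangle z (denseSeq X p) (s (p, k) ω)]

theorem measurable_infDist_image {Y : Type*} [PseudoMetricSpace Y] [MeasurableSpace Y]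
    [OpensMeasurableSpace Y] [BorelSpace X] [CompleteSpace X]
    (hc : ∀ ω, IsClosed (L ω)) (hne : ∀ ω, (L ω).Nonempty)
    (hL : ∀ x, Measurable fun ω => infDist x (L ω)) {F : Ω → X → Y}
    (hF : Measurable (Function.uncurry F)) (hFc : ∀ ω, Continuous (F ω)) (y : Y) :
    Measurable fun ω => infDist y (F ω '' L ω) := by
  obtain ⟨σ, hσ, hσL, hσd⟩ := exists_measurable_dense_selections hc hne hL
  have key : ∀ ω, infDist y (F ω '' L ω) = (⨅ n, edist y (F ω (σ n ω))).toReal := by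
    intro ω
    have hsub : range (fun n => F ω (σ n ω)) ⊆ F ω '' L ω :=
      range_subset_iff.2 fun n => mem_image_of_mem _ (hσL n ω)
    have hsup : F ω '' L ω ⊆ closure (range fun n => F ω (σ n ω)) := by
      rw [image_subset_iff, range_comp']
      exact (hσd ω).trans (closure_subset_preimage_closure_image (hFc ω))
    have : infDist y (F ω '' L ω) = infDist y (range fun n => F ω (σ n ω)) := le_antisymm
      (infDist_le_infDist_of_subset hsub (range_nonempty _))
      (infDist_closure (x := y) ▸ infDist_le_infDist_of_subset hsup ((hne ω).image _))
    rw [this, infDist, infEDist, iInf_range]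
  simp_rw [key]
  exact (Measurable.iInf fun n =>
    measurable_edist_right.comp (hF.comp (measurable_id.prodMk (hσ n)))).ennreal_toReal

end MeasurableSelection

namespace RDS

namespace IsGroupAction

variable {α : Type*} {θ : ℝ → α → α}

lemma apply_apply (h : IsGroupAction θ) {s t u : ℝ} (hu : s + t = u) (a : α) :
    θ t (θ s a) = θ u a := by
  rw [← h.2, hu]

lemma apply_neg_apply (h : IsGroupAction θ) (t : ℝ) (a : α) : θ t (θ (-t) a) = a := by
  rw [h.apply_apply (neg_add_cancel t), h.1]

lemma apply_comm (h : IsGroupAction θ) (s t : ℝ) (a : α) : θ s (θ t a) = θ t (θ s a) := by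
  rw [h.apply_apply rfl, h.apply_apply (add_comm s t)]

end IsGroupAction

section PullbackImage

variable {Ω₁ Ω₂ X : Type*}

variable (θ₁ : ℝ → Ω₁ → Ω₁) (θ₂ : ℝ → Ω₂ → Ω₂) (Φ : ℝ → Ω₁ → Ω₂ → X → X) in
def pullbackImage (B : Ω₁ → Ω₂ → Set X) (t : ℝ) (ω₁ : Ω₁) (ω₂ : Ω₂) : Set X :=
  Φ t (θ₁ (-t) ω₁) (θ₂ (-t) ω₂) '' B (θ₁ (-t) ω₁) (θ₂ (-t) ω₂)

variable (θ₁ : ℝ → Ω₁ → Ω₁) in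
def translation (T : ℝ) (D : Ω₁ → Ω₂ → Set X) : Ω₁ → Ω₂ → Set X :=
  fun ω₁ ω₂ => D (θ₁ T ω₁) ω₂

end PullbackImage

section HausSemidist

variable {X : Type*} [MetricSpace X] {C B : Set X}

lemma exists_lt_infEDist_of_lt_hausSemidist {ε : ℝ≥0∞} (h : ε < hausSemidist C B) :
    ∃ x ∈ C, ε < Metric.infEDist x B := by
  simp only [hausSemidist, lt_iSup_iff, exists_prop] at h
  exact h

lemma subset_closure_of_hausSemidist_eq_zero (h : hausSemidist C B = 0) : C ⊆ closure B :=
  fun x hx => Metric.mem_closure_iff_infEDist_zero.2 <|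
    nonpos_iff_eq_zero.1 (h ▸ le_iSup₂ (f := fun x (_ : x ∈ C) => Metric.infEDist x B) x hx)

end HausSemidist

section Pullback

variable {Ω₁ Ω₂ X : Type*} {θ₁ : ℝ → Ω₁ → Ω₁} {θ₂ : ℝ → Ω₂ → Ω₂}
  {Φ : ℝ → Ω₁ → Ω₂ → X → X} {𝒟 : Set (Ω₁ → Ω₂ → Set X)} {B K : Ω₁ → Ω₂ → Set X}

lemma IsAbsorbingSet.eventually_pullbackImage_subset (hK : IsAbsorbingSet θ₁ θ₂ Φ 𝒟 K)
    (hB : B ∈ 𝒟) (ω₁ : Ω₁) (ω₂ : Ω₂) :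
    ∀ᶠ t in atTop, pullbackImage θ₁ θ₂ Φ B t ω₁ ω₂ ⊆ K ω₁ ω₂ :=
  have ⟨T, _, hT⟩ := hK.2 ω₁ ω₂ B hB
  eventually_atTop.2 ⟨T, hT⟩

lemma pullbackImage_translation (hθ₁ : IsGroupAction θ₁) {T : ℝ}
    (hper : ∀ t : ℝ, 0 ≤ t → ∀ (ω₁ : Ω₁) (ω₂ : Ω₂) (x : X), Φ t (θ₁ T ω₁) ω₂ x = Φ t ω₁ ω₂ x)
    (C : Ω₁ → Ω₂ → Set X) {t : ℝ} (ht : 0 ≤ t) (ω₁ : Ω₁) (ω₂ : Ω₂) :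
    pullbackImage θ₁ θ₂ Φ (translation θ₁ T C) t ω₁ ω₂ =
      pullbackImage θ₁ θ₂ Φ C t (θ₁ T ω₁) ω₂ := by
  simp only [pullbackImage, translation]
  rw [hθ₁.apply_comm T (-t)]
  exact image_congr fun x _ => by rw [← hθ₁.apply_comm T (-t), hper t ht]

section Metric

variable [MetricSpace X] {ω₁ : Ω₁} {ω₂ : Ω₂}

lemma exists_seq_mem_pullbackImage_of_mem_omegaLimit {y : ℕ → X}
    (hy : ∀ n, y n ∈ omegaLimit θ₁ θ₂ Φ B ω₁ ω₂) {τ : ℝ} (hτ : 0 ≤ τ) :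
    ∃ (t : ℕ → ℝ) (z : ℕ → X), (∀ n, τ ≤ t n) ∧ Tendsto t atTop atTop ∧
      (∀ n, z n ∈ pullbackImage θ₁ θ₂ Φ B (t n) ω₁ ω₂) ∧
      Tendsto (fun n => dist (z n) (y n)) atTop (𝓝 0) := by
  have H : ∀ n : ℕ, ∃ t, τ + n ≤ t ∧
      ∃ z ∈ pullbackImage θ₁ θ₂ Φ B t ω₁ ω₂, dist z (y n) < 1 / (n + 1) := by
    intro n
    have hyn := mem_iInter₂.1 (hy n) (τ + n) (mem_Ici.2 (by positivity))
    obtain ⟨z, hz, hyz⟩ := Metric.mem_closure_iff.1 hyn _ Nat.one_div_pos_of_nat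
    obtain ⟨t, ht, hz⟩ := mem_iUnion₂.1 hz
    exact ⟨t, ht, z, hz, by rwa [dist_comm]⟩
  choose t ht z hz hzy using H
  refine ⟨t, z, fun n => le_of_add_le_of_nonneg_left (ht n) n.cast_nonneg,
    tendsto_atTop_mono ht (tendsto_atTop_add_const_left _ τ tendsto_natCast_atTop_atTop), hz,
    squeeze_zero (fun _ => dist_nonneg) (fun n => (hzy n).le)
      tendsto_one_div_add_atTop_nhds_zero_nat⟩

lemma AsymptoticallyCompact.exists_subseq_tendsto (hac : AsymptoticallyCompact θ₁ θ₂ Φ 𝒟)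
    (hB : B ∈ 𝒟) {t : ℕ → ℝ} (ht : Tendsto t atTop atTop) {z : ℕ → X}
    (hz : ∀ n, z n ∈ pullbackImage θ₁ θ₂ Φ B (t n) ω₁ ω₂) :
    ∃ (φ : ℕ → ℕ) (y : X), StrictMono φ ∧ Tendsto (z ∘ φ) atTop (𝓝 y) := by
  choose x hx hxz using hz
  obtain ⟨φ, y, hφ, hy⟩ := hac ω₁ ω₂ B hB t x ht hx
  simp only [hxz] at hy
  exact ⟨φ, y, hφ, hy⟩

section Cocycle

variable [MeasurableSpace X] [MeasurableSpace Ω₂]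

lemma pullbackImage_add (hθ₁ : IsGroupAction θ₁) (hθ₂ : IsGroupAction θ₂)
    (hΦ : IsCocycle θ₁ θ₂ Φ) (B : Ω₁ → Ω₂ → Set X) {τ s : ℝ} (hτ : 0 ≤ τ) (hs : 0 ≤ s)
    (ω₁ : Ω₁) (ω₂ : Ω₂) :
    pullbackImage θ₁ θ₂ Φ B (τ + s) (θ₁ τ ω₁) (θ₂ τ ω₂) =
      Φ τ ω₁ ω₂ '' pullbackImage θ₁ θ₂ Φ B s ω₁ ω₂ := by
  have h₁ : θ₁ (-(τ + s)) (θ₁ τ ω₁) = θ₁ (-s) ω₁ := hθ₁.apply_apply (by ring) ω₁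
  have h₂ : θ₂ (-(τ + s)) (θ₂ τ ω₂) = θ₂ (-s) ω₂ := hθ₂.apply_apply (by ring) ω₂
  simp only [pullbackImage, h₁, h₂, image_image]
  refine image_congr fun x _ => ?_
  rw [hΦ.cocycle τ s hτ hs, hθ₁.apply_neg_apply, hθ₂.apply_neg_apply]

structure IsDissipative (θ₁ : ℝ → Ω₁ → Ω₁) (θ₂ : ℝ → Ω₂ → Ω₂) (Φ : ℝ → Ω₁ → Ω₂ → X → X)
    (𝒟 : Set (Ω₁ → Ω₂ → Set X)) (K : Ω₁ → Ω₂ → Set X) : Prop where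
  groupAction₁ : IsGroupAction θ₁
  groupAction₂ : IsGroupAction θ₂
  cocycle : IsCocycle θ₁ θ₂ Φ
  asymptoticallyCompact : AsymptoticallyCompact θ₁ θ₂ Φ 𝒟
  absorbing : IsAbsorbingSet θ₁ θ₂ Φ 𝒟 K
  isClosed : ∀ ω₁ ω₂, IsClosed (K ω₁ ω₂)
  nonempty : ∀ ω₁ ω₂, (K ω₁ ω₂).Nonempty

namespace IsDissipative

lemma pullbackImage_nonempty (hS : IsDissipative θ₁ θ₂ Φ 𝒟 K) (t : ℝ) (ω₁ : Ω₁) (ω₂ : Ω₂) :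
    (pullbackImage θ₁ θ₂ Φ K t ω₁ ω₂).Nonempty :=
  (hS.nonempty _ _).image _

lemma eventually_pullbackImage_subset_pullbackImage (hS : IsDissipative θ₁ θ₂ Φ 𝒟 K)
    (hB : B ∈ 𝒟) {r : ℝ} (hr : 0 ≤ r) (ω₁ : Ω₁) (ω₂ : Ω₂) :
    ∀ᶠ t in atTop, pullbackImage θ₁ θ₂ Φ B t ω₁ ω₂ ⊆ pullbackImage θ₁ θ₂ Φ K r ω₁ ω₂ := by
  obtain ⟨T, hT⟩ := eventually_atTop.1 <|
    (hS.absorbing.eventually_pullbackImage_subset hB (θ₁ (-r) ω₁) (θ₂ (-r) ω₂)).and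
      (eventually_ge_atTop 0)
  refine eventually_atTop.2 ⟨T + r, fun t ht => ?_⟩
  obtain ⟨hsub, hs⟩ := hT (t - r) (by linarith)
  have h := pullbackImage_add hS.groupAction₁ hS.groupAction₂ hS.cocycle B hr hs
    (θ₁ (-r) ω₁) (θ₂ (-r) ω₂)
  rw [add_sub_cancel, hS.groupAction₁.apply_neg_apply, hS.groupAction₂.apply_neg_apply] at h
  rw [h]
  exact image_mono hsub

lemma mem_omegaLimit_of_tendsto (hS : IsDissipative θ₁ θ₂ Φ 𝒟 K) (hB : B ∈ 𝒟) {t : ℕ → ℝ}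
    (ht : Tendsto t atTop atTop) {z : ℕ → X}
    (hz : ∀ n, z n ∈ pullbackImage θ₁ θ₂ Φ B (t n) ω₁ ω₂) {y : X}
    (hzy : Tendsto z atTop (𝓝 y)) :
    y ∈ omegaLimit θ₁ θ₂ Φ K ω₁ ω₂ := by
  refine mem_iInter₂.2 fun τ hτ => mem_closure_of_tendsto hzy ?_
  filter_upwards [ht.eventually (hS.eventually_pullbackImage_subset_pullbackImage hB hτ ω₁ ω₂)]
    with n hsub
  exact mem_biUnion self_mem_Ici (hsub (hz n))

lemma exists_subseq_tendsto_omegaLimit (hS : IsDissipative θ₁ θ₂ Φ 𝒟 K) (hB : B ∈ 𝒟)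
    {t : ℕ → ℝ} (ht : Tendsto t atTop atTop) {z : ℕ → X}
    (hz : ∀ n, z n ∈ pullbackImage θ₁ θ₂ Φ B (t n) ω₁ ω₂) :
    ∃ (φ : ℕ → ℕ) (y : X), StrictMono φ ∧ y ∈ omegaLimit θ₁ θ₂ Φ K ω₁ ω₂ ∧
      Tendsto (z ∘ φ) atTop (𝓝 y) := by
  obtain ⟨φ, y, hφ, hy⟩ := hS.asymptoticallyCompact.exists_subseq_tendsto hB ht hz
  exact ⟨φ, y, hφ,
    hS.mem_omegaLimit_of_tendsto hB (ht.comp hφ.tendsto_atTop) (fun n => hz (φ n)) hy, hy⟩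

lemma omegaLimit_subset (hS : IsDissipative θ₁ θ₂ Φ 𝒟 K) (ω₁ : Ω₁) (ω₂ : Ω₂) :
    omegaLimit θ₁ θ₂ Φ K ω₁ ω₂ ⊆ K ω₁ ω₂ := by
  obtain ⟨T, hT⟩ := eventually_atTop.1 <|
    hS.absorbing.eventually_pullbackImage_subset hS.absorbing.1 ω₁ ω₂
  intro y hy
  refine (hS.isClosed ω₁ ω₂).closure_subset_iff.2 ?_ (mem_iInter₂.1 hy (max T 0) (le_max_right T 0))
  exact iUnion₂_subset fun t ht => hT t (le_of_max_le_left ht)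

lemma omegaLimit_nonempty (hS : IsDissipative θ₁ θ₂ Φ 𝒟 K) (ω₁ : Ω₁) (ω₂ : Ω₂) :
    (omegaLimit θ₁ θ₂ Φ K ω₁ ω₂).Nonempty := by
  choose z hz using fun n : ℕ => hS.pullbackImage_nonempty n ω₁ ω₂
  obtain ⟨-, y, -, hy, -⟩ :=
    hS.exists_subseq_tendsto_omegaLimit hS.absorbing.1 tendsto_natCast_atTop_atTop hz
  exact ⟨y, hy⟩

lemma isCompact_omegaLimit (hS : IsDissipative θ₁ θ₂ Φ 𝒟 K) (ω₁ : Ω₁) (ω₂ : Ω₂) :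
    IsCompact (omegaLimit θ₁ θ₂ Φ K ω₁ ω₂) := by
  refine IsSeqCompact.isCompact fun y hy => ?_
  obtain ⟨t, z, -, ht, hz, hzy⟩ := exists_seq_mem_pullbackImage_of_mem_omegaLimit hy le_rfl
  obtain ⟨φ, w, hφ, hw, hzw⟩ := hS.exists_subseq_tendsto_omegaLimit hS.absorbing.1 ht hz
  exact ⟨w, hw, φ, hφ, hzw.congr_dist (hzy.comp hφ.tendsto_atTop)⟩

lemma image_omegaLimit_subset (hS : IsDissipative θ₁ θ₂ Φ 𝒟 K) {τ : ℝ} (hτ : 0 ≤ τ)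
    (ω₁ : Ω₁) (ω₂ : Ω₂) :
    Φ τ ω₁ ω₂ '' omegaLimit θ₁ θ₂ Φ K ω₁ ω₂ ⊆ omegaLimit θ₁ θ₂ Φ K (θ₁ τ ω₁) (θ₂ τ ω₂) := by
  rintro - ⟨y, hy, rfl⟩
  obtain ⟨t, z, ht₀, ht, hz, hzy⟩ :=
    exists_seq_mem_pullbackImage_of_mem_omegaLimit (fun _ => hy) le_rfl
  refine hS.mem_omegaLimit_of_tendsto hS.absorbing.1 (tendsto_atTop_add_const_left _ τ ht)
    (fun n => ?_)
    (((hS.cocycle.continuous τ hτ ω₁ ω₂).tendsto y).comp (tendsto_iff_dist_tendsto_zero.2 hzy))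
  rw [pullbackImage_add hS.groupAction₁ hS.groupAction₂ hS.cocycle K hτ (ht₀ n)]
  exact mem_image_of_mem _ (hz n)

lemma omegaLimit_subset_image (hS : IsDissipative θ₁ θ₂ Φ 𝒟 K) {τ : ℝ} (hτ : 0 ≤ τ)
    (ω₁ : Ω₁) (ω₂ : Ω₂) :
    omegaLimit θ₁ θ₂ Φ K (θ₁ τ ω₁) (θ₂ τ ω₂) ⊆ Φ τ ω₁ ω₂ '' omegaLimit θ₁ θ₂ Φ K ω₁ ω₂ := by
  intro y hy
  obtain ⟨t, z, htτ, ht, hz, hzy⟩ :=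
    exists_seq_mem_pullbackImage_of_mem_omegaLimit (fun _ => hy) hτ
  have hw : ∀ n, z n ∈ Φ τ ω₁ ω₂ '' pullbackImage θ₁ θ₂ Φ K (t n - τ) ω₁ ω₂ := fun n => by
    rw [← pullbackImage_add hS.groupAction₁ hS.groupAction₂ hS.cocycle K hτ
      (sub_nonneg.2 (htτ n)), add_sub_cancel]
    exact hz n
  choose w hw hwz using hw
  obtain ⟨φ, x, hφ, hx, hwx⟩ := hS.exists_subseq_tendsto_omegaLimit hS.absorbing.1
    (by simpa only [sub_eq_add_neg] using tendsto_atTop_add_const_right _ (-τ) ht) hw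
  refine ⟨x, hx, tendsto_nhds_unique
    (((hS.cocycle.continuous τ hτ ω₁ ω₂).tendsto x).comp hwx) ?_⟩
  exact ((tendsto_iff_dist_tendsto_zero.2 hzy).comp hφ.tendsto_atTop).congr
    fun n => (hwz (φ n)).symm

lemma invariant_omegaLimit (hS : IsDissipative θ₁ θ₂ Φ 𝒟 K) :
    Invariant θ₁ θ₂ Φ (omegaLimit θ₁ θ₂ Φ K) := fun _ hτ ω₁ ω₂ =>
  (hS.image_omegaLimit_subset hτ ω₁ ω₂).antisymm (hS.omegaLimit_subset_image hτ ω₁ ω₂)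

lemma omegaLimit_mem (hS : IsDissipative θ₁ θ₂ Φ 𝒟 K) (h𝒟 : NeighborhoodClosed 𝒟) :
    omegaLimit θ₁ θ₂ Φ K ∈ 𝒟 :=
  have ⟨_, hε, h⟩ := h𝒟 K hS.absorbing.1
  h _ fun ω₁ ω₂ => ⟨hS.omegaLimit_nonempty ω₁ ω₂,
    (hS.omegaLimit_subset ω₁ ω₂).trans (Metric.self_subset_thickening hε _)⟩

lemma attracts_omegaLimit (hS : IsDissipative θ₁ θ₂ Φ 𝒟 K) (hB : B ∈ 𝒟) :
    Attracts θ₁ θ₂ Φ B (omegaLimit θ₁ θ₂ Φ K) := by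
  intro ω₁ ω₂
  refine ENNReal.tendsto_nhds_zero.2 fun ε hε => ?_
  by_contra hfreq
  simp only [not_eventually, not_le] at hfreq
  choose t ht hεt using fun n : ℕ => frequently_atTop.1 hfreq n
  choose z hz hεz using fun n => exists_lt_infEDist_of_lt_hausSemidist (hεt n)
  obtain ⟨φ, y, -, hy, hzy⟩ := hS.exists_subseq_tendsto_omegaLimit hB
    (tendsto_atTop_mono ht tendsto_natCast_atTop_atTop) hz
  have hεy : ε ≤ Metric.infEDist y (omegaLimit θ₁ θ₂ Φ K ω₁ ω₂) :=
    ge_of_tendsto ((Metric.continuous_infEDist.tendsto y).comp hzy)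
      (Eventually.of_forall fun n => (hεz (φ n)).le)
  rw [Metric.infEDist_zero_of_mem hy] at hεy
  exact hε.ne' (nonpos_iff_eq_zero.1 hεy)

lemma omegaLimit_subset_pullbackImage (hS : IsDissipative θ₁ θ₂ Φ 𝒟 K) {r : ℝ} (hr : 0 ≤ r)
    (ω₁ : Ω₁) (ω₂ : Ω₂) :
    omegaLimit θ₁ θ₂ Φ K ω₁ ω₂ ⊆ pullbackImage θ₁ θ₂ Φ K r ω₁ ω₂ := by
  have h := hS.invariant_omegaLimit r hr (θ₁ (-r) ω₁) (θ₂ (-r) ω₂)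
  rw [hS.groupAction₁.apply_neg_apply, hS.groupAction₂.apply_neg_apply] at h
  rw [← h]
  exact image_mono (hS.omegaLimit_subset _ _)

lemma tendsto_infDist_pullbackImage (hS : IsDissipative θ₁ θ₂ Φ 𝒟 K) (ω₁ : Ω₁) (ω₂ : Ω₂)
    (x : X) :
    Tendsto (fun m : ℕ => Metric.infDist x (pullbackImage θ₁ θ₂ Φ K m ω₁ ω₂)) atTop
      (𝓝 (Metric.infDist x (omegaLimit θ₁ θ₂ Φ K ω₁ ω₂))) := by
  set L := Metric.infDist x (omegaLimit θ₁ θ₂ Φ K ω₁ ω₂)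
  have hle : ∀ m : ℕ, Metric.infDist x (pullbackImage θ₁ θ₂ Φ K m ω₁ ω₂) ≤ L := fun m =>
    Metric.infDist_le_infDist_of_subset (hS.omegaLimit_subset_pullbackImage m.cast_nonneg ω₁ ω₂)
      (hS.omegaLimit_nonempty ω₁ ω₂)
  refine tendsto_order.2 ⟨fun a ha => ?_, fun a ha => Eventually.of_forall fun m =>
    (hle m).trans_lt ha⟩
  by_contra hfreq
  simp only [not_eventually, not_lt] at hfreq
  obtain ⟨φ, hφ, hφa⟩ := extraction_of_frequently_atTop hfreq
  choose z hz hxz using fun n => (Metric.infDist_lt_iff (hS.pullbackImage_nonempty _ ω₁ ω₂)).1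
    ((hφa n).trans_lt (show a < (a + L) / 2 by linarith))
  obtain ⟨ψ, w, -, hw, hzw⟩ := hS.exists_subseq_tendsto_omegaLimit hS.absorbing.1
    (tendsto_natCast_atTop_atTop.comp hφ.tendsto_atTop) hz
  have hxw : dist x w ≤ (a + L) / 2 :=
    le_of_tendsto (tendsto_const_nhds.dist hzw) (Eventually.of_forall fun n => (hxz _).le)
  linarith [Metric.infDist_le_dist_of_mem hw (x := x)]

section Measurability

variable [BorelSpace X] [CompleteSpace X] [SecondCountableTopology X] {P : Measure Ω₂}

lemma nullMeasurable_infDist_pullbackImage (hS : IsDissipative θ₁ θ₂ Φ 𝒟 K) {t : ℝ}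
    (ht : 0 ≤ t) (hθ₂ : Measure.QuasiMeasurePreserving (θ₂ (-t)) P P)
    (hK : ∀ ω₁ x, NullMeasurable (fun ω₂ => Metric.infDist x (K ω₁ ω₂)) P) (ω₁ : Ω₁) (x : X) :
    NullMeasurable (fun ω₂ => Metric.infDist x (pullbackImage θ₁ θ₂ Φ K t ω₁ ω₂)) P := by
  have hθ : @Measurable (NullMeasurableSpace Ω₂ P) Ω₂ _ _ (θ₂ (-t)) :=
    hθ₂.measurable.nullMeasurable.measurable'
  exact measurable_infDist_image (Ω := NullMeasurableSpace Ω₂ P)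
    (L := fun ω₂ => K (θ₁ (-t) ω₁) (θ₂ (-t) ω₂)) (F := fun ω₂ => Φ t (θ₁ (-t) ω₁) (θ₂ (-t) ω₂))
    (fun _ => hS.isClosed _ _) (fun _ => hS.nonempty _ _)
    (fun y => (hK _ y).comp_quasiMeasurePreserving hθ₂)
    ((hS.cocycle.measurable _).comp <| (measurable_const (a := (⟨t, ht⟩ : {s : ℝ // 0 ≤ s}))).prodMk
      ((hθ.comp measurable_fst).prodMk measurable_snd))
    (fun _ => hS.cocycle.continuous t ht _ _) x

lemma nullMeasurable_infDist_omegaLimit (hS : IsDissipative θ₁ θ₂ Φ 𝒟 K)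
    (hθ₂ : ∀ t, Measure.QuasiMeasurePreserving (θ₂ t) P P)
    (hK : ∀ ω₁ x, NullMeasurable (fun ω₂ => Metric.infDist x (K ω₁ ω₂)) P) (ω₁ : Ω₁) (x : X) :
    NullMeasurable (fun ω₂ => Metric.infDist x (omegaLimit θ₁ θ₂ Φ K ω₁ ω₂)) P :=
  measurable_of_tendsto_metrizable (α := NullMeasurableSpace Ω₂ P)
    (fun m => hS.nullMeasurable_infDist_pullbackImage m.cast_nonneg (hθ₂ _) hK ω₁ x)
    (tendsto_pi_nhds.2 fun ω₂ => hS.tendsto_infDist_pullbackImage ω₁ ω₂ x)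

theorem isPullbackAttractor_omegaLimit (hS : IsDissipative θ₁ θ₂ Φ 𝒟 K)
    (h𝒟 : NeighborhoodClosed 𝒟) (hθ₂ : ∀ t, Measure.QuasiMeasurePreserving (θ₂ t) P P)
    (hK : ∀ ω₁ x, NullMeasurable (fun ω₂ => Metric.infDist x (K ω₁ ω₂)) P) :
    IsPullbackAttractor θ₁ θ₂ Φ P 𝒟 (omegaLimit θ₁ θ₂ Φ K) where
  mem := hS.omegaLimit_mem h𝒟
  compact := hS.isCompact_omegaLimit
  measurable := hS.nullMeasurable_infDist_omegaLimit hθ₂ hK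
  invariant := hS.invariant_omegaLimit
  attracts _ hB := hS.attracts_omegaLimit hB

end Measurability

end IsDissipative

end Cocycle

section Attractor

variable {A A' : Ω₁ → Ω₂ → Set X}

lemma Invariant.subset_of_attracts (hθ₁ : IsGroupAction θ₁) (hθ₂ : IsGroupAction θ₂)
    (hA : Invariant θ₁ θ₂ Φ A) (hA' : ∀ ω₁ ω₂, IsClosed (A' ω₁ ω₂))
    (hatt : Attracts θ₁ θ₂ Φ A A') (ω₁ : Ω₁) (ω₂ : Ω₂) : A ω₁ ω₂ ⊆ A' ω₁ ω₂ := by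
  have hconst : ∀ᶠ t in atTop, hausSemidist (pullbackImage θ₁ θ₂ Φ A t ω₁ ω₂) (A' ω₁ ω₂) =
      hausSemidist (A ω₁ ω₂) (A' ω₁ ω₂) := by
    filter_upwards [eventually_ge_atTop 0] with t ht
    rw [pullbackImage, hA t ht, hθ₁.apply_neg_apply, hθ₂.apply_neg_apply]
  rw [← (hA' ω₁ ω₂).closure_eq]
  exact subset_closure_of_hausSemidist_eq_zero <|
    tendsto_nhds_unique tendsto_const_nhds ((hatt ω₁ ω₂).congr' hconst)

lemma IsPullbackAttractor.unique [MeasurableSpace Ω₂] {P : Measure Ω₂}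
    (hθ₁ : IsGroupAction θ₁) (hθ₂ : IsGroupAction θ₂)
    (hA : IsPullbackAttractor θ₁ θ₂ Φ P 𝒟 A) (hA' : IsPullbackAttractor θ₁ θ₂ Φ P 𝒟 A') :
    A = A' :=
  funext₂ fun ω₁ ω₂ => (hA.invariant.subset_of_attracts hθ₁ hθ₂
    (fun _ _ => (hA'.compact _ _).isClosed) (hA'.attracts A hA.mem) ω₁ ω₂).antisymm
    (hA'.invariant.subset_of_attracts hθ₁ hθ₂
      (fun _ _ => (hA.compact _ _).isClosed) (hA.attracts A' hA'.mem) ω₁ ω₂)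

lemma IsPullbackAttractor.translation_of_periodic [MeasurableSpace Ω₂] {P : Measure Ω₂}
    (hθ₁ : IsGroupAction θ₁) {T : ℝ}
    (hper : ∀ t : ℝ, 0 ≤ t → ∀ (ω₁ : Ω₁) (ω₂ : Ω₂) (x : X), Φ t (θ₁ T ω₁) ω₂ x = Φ t ω₁ ω₂ x)
    (h𝒟 : translation θ₁ T '' 𝒟 = 𝒟) (hA : IsPullbackAttractor θ₁ θ₂ Φ P 𝒟 A) :
    IsPullbackAttractor θ₁ θ₂ Φ P 𝒟 (translation θ₁ T A) where
  mem := h𝒟 ▸ mem_image_of_mem _ hA.mem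
  compact _ _ := hA.compact _ _
  measurable _ := hA.measurable _
  invariant t ht ω₁ ω₂ :=
    calc Φ t ω₁ ω₂ '' A (θ₁ T ω₁) ω₂ = Φ t (θ₁ T ω₁) ω₂ '' A (θ₁ T ω₁) ω₂ :=
          image_congr fun x _ => (hper t ht ω₁ ω₂ x).symm
      _ = A (θ₁ t (θ₁ T ω₁)) (θ₂ t ω₂) := hA.invariant t ht _ _
      _ = translation θ₁ T A (θ₁ t ω₁) (θ₂ t ω₂) := by rw [translation, hθ₁.apply_comm]
  attracts B hB ω₁ ω₂ := by
    obtain ⟨C, hC, rfl⟩ : B ∈ translation θ₁ T '' 𝒟 := h𝒟.symm ▸ hB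
    refine (hA.attracts C hC (θ₁ T ω₁) ω₂).congr' ?_
    filter_upwards [eventually_ge_atTop 0] with t ht
    exact congrArg (hausSemidist · _) (pullbackImage_translation hθ₁ hper C ht ω₁ ω₂).symm

end Attractor

end Metric

theorem periodic_attractor_exists_general
    {Ω₁ Ω₂ X : Type*}
    [MetricSpace X] [CompleteSpace X] [SecondCountableTopology X]
    [MeasurableSpace X] [BorelSpace X]
    [MeasurableSpace Ω₂] (P : Measure Ω₂)
    (θ₁ : ℝ → Ω₁ → Ω₁) (θ₂ : ℝ → Ω₂ → Ω₂)
    (hθ₁ : IsGroupAction θ₁) (hθ₂ : IsGroupAction θ₂)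
    (hθ₂pres : ∀ t : ℝ, MeasurePreserving (θ₂ t) P P)
    (Φ : ℝ → Ω₁ → Ω₂ → X → X)
    (hΦ : IsCocycle θ₁ θ₂ Φ)
    (T : ℝ)
    (hper : ∀ t : ℝ, 0 ≤ t → ∀ (ω₁ : Ω₁) (ω₂ : Ω₂) (x : X),
      Φ t (θ₁ T ω₁) ω₂ x = Φ t ω₁ ω₂ x)
    (𝒟 : Set (Ω₁ → Ω₂ → Set X))
    (h𝒟nc : NeighborhoodClosed 𝒟)
    (h𝒟inv : (fun D : Ω₁ → Ω₂ → Set X => fun ω₁ ω₂ => D (θ₁ T ω₁) ω₂) '' 𝒟 = 𝒟)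
    (hac : AsymptoticallyCompact θ₁ θ₂ Φ 𝒟)
    (K : Ω₁ → Ω₂ → Set X)
    (hK : IsClosedMeasurableAbsorbingSet θ₁ θ₂ Φ P 𝒟 K) :
    ∃ A : Ω₁ → Ω₂ → Set X, IsPullbackAttractor θ₁ θ₂ Φ P 𝒟 A ∧
      (∀ A' : Ω₁ → Ω₂ → Set X, IsPullbackAttractor θ₁ θ₂ Φ P 𝒟 A' → A' = A) ∧
      ∀ (ω₁ : Ω₁) (ω₂ : Ω₂), A (θ₁ T ω₁) ω₂ = A ω₁ ω₂ := by
  obtain ⟨hKabs, hKcl, hKm⟩ := hK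
  have hS : IsDissipative θ₁ θ₂ Φ 𝒟 K :=
    ⟨hθ₁, hθ₂, hΦ, hac, hKabs, fun ω₁ ω₂ => (hKcl ω₁ ω₂).1, fun ω₁ ω₂ => (hKcl ω₁ ω₂).2⟩
  have hA := hS.isPullbackAttractor_omegaLimit h𝒟nc
    (fun t => (hθ₂pres t).quasiMeasurePreserving) hKm
  refine ⟨_, hA, fun A' hA' => hA'.unique hθ₁ hθ₂ hA, fun ω₁ ω₂ => ?_⟩
  have hAT := (hA.translation_of_periodic hθ₁ hper h𝒟inv).unique hθ₁ hθ₂ hA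
  exact congrFun (congrFun hAT ω₁) ω₂

theorem periodic_attractor_exists
    {Ω₁ Ω₂ X : Type*} [Nonempty Ω₁]
    [MetricSpace X] [CompleteSpace X] [SecondCountableTopology X]
    [MeasurableSpace X] [BorelSpace X]
    [MeasurableSpace Ω₂] (P : Measure Ω₂) [IsProbabilityMeasure P]
    (θ₁ : ℝ → Ω₁ → Ω₁) (θ₂ : ℝ → Ω₂ → Ω₂)
    (hθ₁ : IsGroupAction θ₁) (hθ₂ : IsGroupAction θ₂)
    (hθ₂meas : Measurable fun p : ℝ × Ω₂ => θ₂ p.1 p.2)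
    (hθ₂pres : ∀ t : ℝ, MeasurePreserving (θ₂ t) P P)
    (Φ : ℝ → Ω₁ → Ω₂ → X → X)
    (hΦ : IsCocycle θ₁ θ₂ Φ)
    (T : ℝ) (hT : 0 < T)
    (hper : ∀ t : ℝ, 0 ≤ t → ∀ (ω₁ : Ω₁) (ω₂ : Ω₂) (x : X),
      Φ t (θ₁ T ω₁) ω₂ x = Φ t ω₁ ω₂ x)
    (𝒟 : Set (Ω₁ → Ω₂ → Set X))
    (h𝒟ne : FamiliesOfNonemptySets 𝒟)
    (h𝒟nc : NeighborhoodClosed 𝒟)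
    (h𝒟inv : (fun D : Ω₁ → Ω₂ → Set X => fun ω₁ ω₂ => D (θ₁ T ω₁) ω₂) '' 𝒟 = 𝒟)
    (hac : AsymptoticallyCompact θ₁ θ₂ Φ 𝒟)
    (K : Ω₁ → Ω₂ → Set X)
    (hK : IsClosedMeasurableAbsorbingSet θ₁ θ₂ Φ P 𝒟 K) :
    ∃ A : Ω₁ → Ω₂ → Set X, IsPullbackAttractor θ₁ θ₂ Φ P 𝒟 A ∧
      (∀ A' : Ω₁ → Ω₂ → Set X, IsPullbackAttractor θ₁ θ₂ Φ P 𝒟 A' → A' = A) ∧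
      ∀ (ω₁ : Ω₁) (ω₂ : Ω₂), A (θ₁ T ω₁) ω₂ = A ω₁ ω₂ :=
  periodic_attractor_exists_general P θ₁ θ₂ hθ₁ hθ₂ hθ₂pres Φ hΦ T hper 𝒟 h𝒟nc h𝒟inv hac K hK

end Pullback

end RDS
end
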